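/- If a potential game has a continuous potential function J on a nonempty compact product strategy space Ω = Ω₁ × ⋯ × Ωₙ (each Ωᵢ a compact subset of a metric/topological space), then a Nash equilibrium exists. -/

import Mathlib

/-!
A minimiser of the potential is a Nash equilibrium: a unilateral deviation changes the deviating
player's cost by exactly the change of the potential, which is nonnegative at a global minimum.
Such a minimiser exists by the extreme value theorem, since the product of the compact strategy
spaces is compact.
-/

open Function

section PotentialGame

variable {ι R : Type*} [DecidableEq ι] {Ω : ι → Type*}

def IsExactPotential [Sub R] (u : ι → (∀ i, Ω i) → R) (J : (∀ i, Ω i) → R) : Prop :=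
  ∀ (i : ι) (p : ∀ i, Ω i) (x y : Ω i),
    u i (update p i x) - u i (update p i y) = J (update p i x) - J (update p i y)

/-- Players minimise their costs `u i`. -/
def IsNashEquilibrium [Preorder R] (u : ι → (∀ i, Ω i) → R) (p : ∀ i, Ω i) : Prop :=
  ∀ (i : ι) (x : Ω i), u i p ≤ u i (update p i x)

theorem IsExactPotential.isNashEquilibrium_iff
    [AddCommGroup R] [PartialOrder R] [IsOrderedAddMonoid R]
    {u : ι → (∀ i, Ω i) → R} {J : (∀ i, Ω i) → R}
    (hJ : IsExactPotential u J) {p : ∀ i, Ω i} :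
    IsNashEquilibrium u p ↔ IsNashEquilibrium (fun _ ↦ J) p := by
  refine forall₂_congr fun i x ↦ ?_
  have hdev := hJ i p x (p i)
  rw [update_eq_self] at hdev
  rw [← sub_nonneg, hdev, sub_nonneg]

theorem isNashEquilibrium_const_of_isMinOn [Preorder R] {J : (∀ i, Ω i) → R} {p : ∀ i, Ω i}
    (hp : IsMinOn J Set.univ p) : IsNashEquilibrium (fun _ ↦ J) p :=
  fun _ _ ↦ hp (Set.mem_univ _)

end PotentialGame

theorem stmt_6 (n : ℕ) (Ω : Fin n → Type*)
    [∀ i, TopologicalSpace (Ω i)] [∀ i, CompactSpace (Ω i)] [∀ i, Nonempty (Ω i)]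
    (u : Fin n → (∀ i, Ω i) → ℝ) (J : (∀ i, Ω i) → ℝ) (hJ : Continuous J)
    (hpot : ∀ (i : Fin n) (p : ∀ i, Ω i) (x y : Ω i),
      u i (Function.update p i x) - u i (Function.update p i y)
        = J (Function.update p i x) - J (Function.update p i y)) :
    ∃ p : ∀ i, Ω i, ∀ (i : Fin n) (x : Ω i), u i p ≤ u i (Function.update p i x) := by
  obtain ⟨p, -, hp⟩ := isCompact_univ.exists_isMinOn Set.univ_nonempty hJ.continuousOn
  have hpot : IsExactPotential u J := hpot
  exact ⟨p, hpot.isNashEquilibrium_iff.mpr (isNashEquilibrium_const_of_isMinOn hp)⟩
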